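/- Let n ≥ 0 and m ≥ 2 be natural numbers, and let a₀, …, a_n : ℂ² → ℂ be nonzero linear functionals that are pairwise linearly independent. Then the set of one-dimensional ℂ-linear subspaces T ⊆ ℂ² with the property that for some nonzero t ∈ T there exists a nonzero x ∈ ℂ^{n+1} at which all n+1 formal partial derivatives of the polynomial a₀(t)·X₀^m + ⋯ + a_n(t)·X_n^m vanish, has exactly n+1 elements. -/

import Mathlib

/-!
A point `x ≠ 0` is singular on `∑ cⱼ Xⱼ^m` iff `m cᵢ xᵢ^(m-1) = 0` for all `i`, which (in
characteristic zero, `m ≥ 2`) happens iff some coefficient `cᵢ` vanishes. Hence a member `t` of the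
pencil is singular iff `aᵢ(t) = 0` for some `i`, i.e. iff the line through `t` is `ker aᵢ`. These
`n + 1` kernels are distinct because equal kernels would make two of the functionals proportional.
-/

open MvPolynomial

section FermatPolynomial

variable {R σ : Type*} [Fintype σ] [DecidableEq σ]

theorem eval_pderiv_sum_C_mul_X_pow [CommSemiring R] (c x : σ → R) (m : ℕ) (i : σ) :
    eval x (pderiv i (∑ j, C (c j) * X j ^ m)) = c i * (m * x i ^ (m - 1)) := by
  simp [pderiv_X, Pi.single_apply, mul_comm]

theorem exists_ne_zero_forall_eval_pderiv_sum_C_mul_X_pow_eq_zero_iff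
    [CommRing R] [IsDomain R] [CharZero R] (c : σ → R) {m : ℕ} (hm : 2 ≤ m) :
    (∃ x : σ → R, x ≠ 0 ∧ ∀ i, eval x (pderiv i (∑ j, C (c j) * X j ^ m)) = 0) ↔
      ∃ i, c i = 0 := by
  simp only [eval_pderiv_sum_C_mul_X_pow]
  constructor
  · rintro ⟨x, hx, hsing⟩
    obtain ⟨i, hxi⟩ : ∃ i, x i ≠ 0 := Function.ne_iff.mp hx
    refine ⟨i, ?_⟩
    simpa [hxi, show m ≠ 0 by lia] using hsing i
  · rintro ⟨i, hci⟩
    refine ⟨Pi.single i 1, by simp, fun j => ?_⟩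
    rcases eq_or_ne j i with rfl | hji
    · simp [hci]
    · simp [hji, show m - 1 ≠ 0 by lia]

end FermatPolynomial

section LinearFunctionals

variable {K V ι : Type*} [Field K] [AddCommGroup V] [Module K V]

theorem Submodule.eq_of_finrank_eq_one_of_mem {S S' : Submodule K V} {w : V}
    (hS : Module.finrank K S = 1) (hS' : Module.finrank K S' = 1)
    (hw : w ∈ S) (hw' : w ∈ S') (hw0 : w ≠ 0) : S = S' :=
  (eq_span_singleton_of_mem_of_finrank_eq_one hS hw hw0).trans
    (eq_span_singleton_of_mem_of_finrank_eq_one hS' hw' hw0).symm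

theorem LinearMap.not_linearIndependent_pair_of_ker_le {f g : V →ₗ[K] K}
    (h : LinearMap.ker g ≤ LinearMap.ker f) : ¬ LinearIndependent K ![f, g] := by
  have hf : f ∈ Submodule.span K (Set.range fun _ : Unit => g) :=
    mem_span_of_iInf_ker_le_ker (by simpa using h)
  obtain ⟨c, hc⟩ := Submodule.mem_span_singleton.mp (by simpa using hf)
  rw [linearIndependent_fin2]
  exact fun hli => hli.2 c (by simpa using hc)

theorem setOf_finrank_eq_one_exists_ker_eq_range [FiniteDimensional K V]
    (hV : Module.finrank K V = 2) {a : ι → V →ₗ[K] K} (ha : ∀ i, a i ≠ 0) :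
    {T : Submodule K V | Module.finrank K T = 1 ∧ ∃ t ∈ T, t ≠ 0 ∧ ∃ i, a i t = 0} =
      Set.range fun i => LinearMap.ker (a i) := by
  have hker : ∀ i, Module.finrank K (LinearMap.ker (a i)) = 1 := fun i => by
    have := Module.Dual.finrank_ker_add_one_of_ne_zero (ha i)
    lia
  ext T
  constructor
  · rintro ⟨hT, t, htT, ht0, i, hti⟩
    exact ⟨i, Submodule.eq_of_finrank_eq_one_of_mem (hker i) hT hti htT ht0⟩
  · rintro ⟨i, rfl⟩
    obtain ⟨t, hti, ht0⟩ := Submodule.exists_mem_ne_zero_of_ne_bot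
      (Submodule.one_le_finrank_iff.mp (hker i).ge)
    exact ⟨hker i, t, hti, ht0, i, hti⟩

end LinearFunctionals

/-- Example (3.3)(d): a general pencil in the Fermat-type linear system
`⟨x₀^m, …, x_n^m⟩` on `ℙⁿ` (given by pairwise linearly independent nonzero linear
functionals `a₀, …, a_n` on `ℂ²`) contains exactly `n+1` singular members: the set of
lines `T ⊆ ℂ²` yielding a singular member has exactly `n+1` elements. -/
theorem stmt3 (n m : ℕ) (hm : 2 ≤ m)
    (a : Fin (n + 1) → ((Fin 2 → ℂ) →ₗ[ℂ] ℂ))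
    (ha : ∀ i, a i ≠ 0)
    (hind : ∀ i j, i ≠ j → LinearIndependent ℂ ![a i, a j]) :
    {T : Submodule ℂ (Fin 2 → ℂ) |
        Module.finrank ℂ T = 1 ∧
        ∃ t ∈ T, t ≠ 0 ∧
          ∃ x : Fin (n + 1) → ℂ, x ≠ 0 ∧
            ∀ i : Fin (n + 1),
              eval x (pderiv i (∑ j : Fin (n + 1), C (a j t) * X j ^ m)) = 0}.ncard
      = n + 1 := by
  have hinj : Function.Injective fun i => LinearMap.ker (a i) := fun i j hij => by
    by_contra hne
    exact LinearMap.not_linearIndependent_pair_of_ker_le hij.ge (hind i j hne)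
  simp_rw [exists_ne_zero_forall_eval_pderiv_sum_C_mul_X_pow_eq_zero_iff _ hm]
  rw [setOf_finrank_eq_one_exists_ker_eq_range (by simp) ha, Set.ncard_range_of_injective hinj,
    Nat.card_fin]
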